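/- For fixed r, d > 0, the function g(σ) = σ·(1 − Π₀(r,σ,d)) is continuous and strictly increasing on [0,∞), with g(0) = 0 and g(σ) < r for all σ, where Π₀(r,σ,d) = (∑_{k=0}^∞ r^k / ∏_{m=1}^{k}(σ + m·d))^{-1}. -/

import Mathlib

open scoped BigOperators

/-- Term of the normalizing series of the birth-death queue:
`r^l / ∏_{m=1}^{l} (s + m·d)`, empty product = 1. -/
noncomputable def qterm (r s d : ℝ) (l : ℕ) : ℝ :=
  r ^ l / ∏ m ∈ Finset.Icc 1 l, (s + (m : ℝ) * d)

/-- Stationary empty-queue probability `Π₀(r,s,d)`. -/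
noncomputable def Pi0 (r s d : ℝ) : ℝ := (∑' l : ℕ, qterm r s d l)⁻¹

/-!
Summing the balance equations `(σ + (l+1) d) q_{l+1} = r q_l` of the queue shows that the
throughput is `g(σ) = r - d · E_σ[L]`, where `E_σ[L]` is the mean stationary queue length: every
arrival is either served or reneges. Increasing `σ` makes the ratio `q_l(σ') / q_l(σ)` strictly
decreasing in `l` (likelihood-ratio order), so each tail `P_σ(L ≥ k)` decreases, and hence so does
`E_σ[L] = ∑_k P_σ(L > k)`, strictly. Continuity comes from the bound `q_l ≤ (r/d)^l / l!`,
uniform in `σ ≥ 0`.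
-/

open Finset

section FirstMoment

variable {f : ℕ → ℝ}

theorem summable_of_summable_nat_mul (hf : 0 ≤ f) (h : Summable fun n : ℕ => (n : ℝ) * f n) :
    Summable f := by
  refine (summable_nat_add_iff 1).mp (Summable.of_nonneg_of_le (fun n => hf _) (fun n => ?_)
    ((summable_nat_add_iff 1).mpr h))
  push_cast
  exact le_mul_of_one_le_left (hf _) (by linarith [(n.cast_nonneg : (0 : ℝ) ≤ n)])

theorem hasSum_tsum_tail (hf : 0 ≤ f) (h : Summable fun n : ℕ => (n : ℝ) * f n) :
    HasSum (fun k => ∑' l, f (l + (k + 1))) (∑' n : ℕ, (n : ℝ) * f n) := by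
  -- summing `F` over `k` gives `n * f n`, summing it over `n` gives the `k`-th tail
  let F : ℕ × ℕ → ℝ := fun p => if p.2 < p.1 then f p.1 else 0
  have hF : 0 ≤ F := fun p => by dsimp only [F]; split_ifs; exacts [hf _, le_rfl]
  have hfiber : ∀ n, HasSum (fun k => F (n, k)) ((n : ℝ) * f n) := fun n => by
    have : HasSum (fun k => F (n, k)) (∑ k ∈ range n, F (n, k)) :=
      hasSum_sum_of_ne_finset_zero fun k hk => if_neg (by simpa using hk)
    convert this using 1
    rw [Finset.sum_congr rfl fun k hk => (if_pos (Finset.mem_range.mp hk) : F (n, k) = f n)]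
    simp
  have hFsum : Summable F :=
    (summable_prod_of_nonneg hF).mpr ⟨fun n => (hfiber n).summable,
      by simpa only [fun n => (hfiber n).tsum_eq] using h⟩
  have hFval : ∑' p, F p = ∑' n : ℕ, (n : ℝ) * f n := by
    rw [hFsum.tsum_prod' fun n => (hfiber n).summable]
    exact tsum_congr fun n => (hfiber n).tsum_eq
  have hswap : HasSum (fun p : ℕ × ℕ => F p.swap) (∑' n : ℕ, (n : ℝ) * f n) := by
    rw [← hFval, ← (Equiv.prodComm ℕ ℕ).tsum_eq F]
    exact hFsum.prod_symm.hasSum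
  refine hswap.prod_fiberwise fun k => ?_
  have htail := ((summable_nat_add_iff (k + 1)).mpr (summable_of_summable_nat_mul hf h)).hasSum
  have hhead : ∑ i ∈ range (k + 1), F (i, k) = 0 :=
    Finset.sum_eq_zero fun i hi => if_neg (by simp at hi; omega)
  rw [← add_zero (∑' l, f (l + (k + 1))), ← hhead]
  refine (hasSum_nat_add_iff (f := fun n => F (n, k)) (k + 1)).mp ?_
  simpa [F, show ∀ l, k < l + (k + 1) from fun l => by omega] using htail

end FirstMoment

section LikelihoodRatio

variable {p q : ℕ → ℝ}

theorem mul_le_mul_of_antitone_div (hp : ∀ n, 0 < p n) (hpq : Antitone fun n => q n / p n)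
    {j l : ℕ} (hjl : j ≤ l) : q l * p j ≤ p l * q j := by
  rw [mul_comm (p l)]
  exact (div_le_div_iff₀ (hp l) (hp j)).mp (hpq hjl)

theorem tsum_nat_add_mul_tsum_le (hp : ∀ n, 0 < p n) (hpq : Antitone fun n => q n / p n)
    (hps : Summable p) (hqs : Summable q) (k : ℕ) :
    (∑' l, q (l + k)) * ∑' n, p n ≤ (∑' l, p (l + k)) * ∑' n, q n := by
  have hhead : (∑' l, q (l + k)) * ∑ j ∈ range k, p j ≤
      (∑' l, p (l + k)) * ∑ j ∈ range k, q j := by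
    rw [Finset.mul_sum, Finset.mul_sum]
    refine Finset.sum_le_sum fun j hj => ?_
    rw [← tsum_mul_right, ← tsum_mul_right]
    refine Summable.tsum_le_tsum (fun l => ?_) (((summable_nat_add_iff k).mpr hqs).mul_right _)
      (((summable_nat_add_iff k).mpr hps).mul_right _)
    exact mul_le_mul_of_antitone_div hp hpq (by simp only [mem_range] at hj; omega)
  rw [← hps.sum_add_tsum_nat_add k, ← hqs.sum_add_tsum_nat_add k]
  linarith

theorem tsum_nat_add_one_mul_tsum_lt (hp : ∀ n, 0 < p n) (hpq : Antitone fun n => q n / p n)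
    (h01 : q 1 / p 1 < q 0 / p 0) (hps : Summable p) (hqs : Summable q) :
    (∑' l, q (l + 1)) * ∑' n, p n < (∑' l, p (l + 1)) * ∑' n, q n := by
  have hhead : (∑' l, q (l + 1)) * p 0 < (∑' l, p (l + 1)) * q 0 := by
    rw [← tsum_mul_right, ← tsum_mul_right]
    refine Summable.tsum_lt_tsum (i := 0)
      (fun l => mul_le_mul_of_antitone_div hp hpq (Nat.zero_le _)) ?_
      (((summable_nat_add_iff 1).mpr hqs).mul_right _)
      (((summable_nat_add_iff 1).mpr hps).mul_right _)
    show q 1 * p 0 < p 1 * q 0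
    rw [mul_comm (p 1)]
    exact (div_lt_div_iff₀ (hp 1) (hp 0)).mp h01
  rw [hps.tsum_eq_zero_add, hqs.tsum_eq_zero_add]
  linarith

/-- The likelihood-ratio order implies the order of the means. -/
theorem tsum_nat_mul_mul_tsum_lt (hp : ∀ n, 0 < p n) (hq : 0 ≤ q)
    (hpq : Antitone fun n => q n / p n) (h01 : q 1 / p 1 < q 0 / p 0)
    (hp₁ : Summable fun n : ℕ => (n : ℝ) * p n) (hq₁ : Summable fun n : ℕ => (n : ℝ) * q n) :
    (∑' n : ℕ, (n : ℝ) * q n) * ∑' n, p n < (∑' n : ℕ, (n : ℝ) * p n) * ∑' n, q n := by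
  have hps := summable_of_summable_nat_mul (fun n => (hp n).le) hp₁
  have hqs := summable_of_summable_nat_mul hq hq₁
  exact hasSum_lt (i := 0) (fun k => tsum_nat_add_mul_tsum_le hp hpq hps hqs (k + 1))
    (tsum_nat_add_one_mul_tsum_lt hp hpq h01 hps hqs)
    ((hasSum_tsum_tail hq hq₁).mul_right _)
    ((hasSum_tsum_tail (fun n => (hp n).le) hp₁).mul_right _)

end LikelihoodRatio

section Queue

variable {r s d : ℝ}

theorem prod_add_mul_pos (hs : 0 ≤ s) (hd : 0 < d) (l : ℕ) :
    0 < ∏ m ∈ Icc 1 l, (s + (m : ℝ) * d) :=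
  prod_pos fun _ hm => add_pos_of_nonneg_of_pos hs
    (mul_pos (Nat.cast_pos.mpr (mem_Icc.mp hm).1) hd)

theorem qterm_pos (hr : 0 < r) (hs : 0 ≤ s) (hd : 0 < d) (l : ℕ) : 0 < qterm r s d l :=
  div_pos (pow_pos hr l) (prod_add_mul_pos hs hd l)

theorem qterm_zero : qterm r s d 0 = 1 := by
  simp [qterm]

theorem qterm_succ (l : ℕ) :
    qterm r s d (l + 1) = r / (s + (l + 1) * d) * qterm r s d l := by
  rw [qterm, qterm, prod_Icc_succ_top (by omega), pow_succ, div_mul_div_comm, mul_comm r,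
    mul_comm (s + _)]
  push_cast
  rfl

theorem qterm_le_pow_div_factorial (hr : 0 < r) (hs : 0 ≤ s) (hd : 0 < d) (l : ℕ) :
    qterm r s d l ≤ (r / d) ^ l / l.factorial := by
  induction l with
  | zero => simp [qterm_zero]
  | succ l ih =>
    have hstep : r / (s + (l + 1) * d) ≤ r / ((l + 1) * d) :=
      div_le_div_of_nonneg_left hr.le (by positivity) (by linarith)
    calc qterm r s d (l + 1) = r / (s + (l + 1) * d) * qterm r s d l := qterm_succ l
      _ ≤ r / ((l + 1) * d) * ((r / d) ^ l / l.factorial) :=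
        mul_le_mul hstep ih (qterm_pos hr hs hd l).le (by positivity)
      _ = (r / d) ^ (l + 1) / (l + 1).factorial := by
        rw [Nat.factorial_succ, pow_succ]
        push_cast
        field_simp

theorem summable_qterm (hr : 0 < r) (hs : 0 ≤ s) (hd : 0 < d) : Summable (qterm r s d) :=
  .of_nonneg_of_le (fun l => (qterm_pos hr hs hd l).le) (qterm_le_pow_div_factorial hr hs hd)
    (Real.summable_pow_div_factorial _)

theorem summable_nat_mul_qterm (hr : 0 < r) (hs : 0 ≤ s) (hd : 0 < d) :
    Summable fun n : ℕ => (n : ℝ) * qterm r s d n := by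
  refine (summable_nat_add_iff 1).mp (.of_nonneg_of_le (fun l => by
    have := qterm_pos hr hs hd (l + 1); positivity) (fun l => ?_)
    ((summable_qterm hr hs hd).mul_left (r / d)))
  have hcoef : ((l : ℝ) + 1) * (r / (s + (l + 1) * d)) ≤ r / d := by
    rw [← mul_div_assoc, div_le_div_iff₀ (by positivity) hd]
    nlinarith
  calc ((l + 1 : ℕ) : ℝ) * qterm r s d (l + 1)
      = ((l : ℝ) + 1) * (r / (s + (l + 1) * d)) * qterm r s d l := by
        rw [qterm_succ]; push_cast; ring
    _ ≤ r / d * qterm r s d l := mul_le_mul_of_nonneg_right hcoef (qterm_pos hr hs hd l).le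

theorem tsum_qterm_pos (hr : 0 < r) (hs : 0 ≤ s) (hd : 0 < d) : 0 < ∑' n, qterm r s d n :=
  (summable_qterm hr hs hd).tsum_pos (fun n => (qterm_pos hr hs hd n).le) 0
    (qterm_pos hr hs hd 0)

theorem continuousOn_tsum_qterm (hr : 0 < r) (hd : 0 < d) :
    ContinuousOn (fun s => ∑' n, qterm r s d n) (Set.Ici 0) :=
  continuousOn_tsum (fun l => ContinuousOn.div continuousOn_const (by fun_prop)
      fun s hs => (prod_add_mul_pos hs hd l).ne')
    (Real.summable_pow_div_factorial (r / d)) fun l s hs => by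
      rw [Real.norm_of_nonneg (qterm_pos hr hs hd l).le]
      exact qterm_le_pow_div_factorial hr hs hd l

theorem mul_one_sub_Pi0 (hr : 0 < r) (hs : 0 ≤ s) (hd : 0 < d) :
    s * (1 - Pi0 r s d) =
      r - d * ((∑' n : ℕ, (n : ℝ) * qterm r s d n) / ∑' n, qterm r s d n) := by
  have hq := (summable_qterm hr hs hd).hasSum
  have hN := (summable_nat_mul_qterm hr hs hd).hasSum
  set S := ∑' n, qterm r s d n
  set N := ∑' n : ℕ, (n : ℝ) * qterm r s d n
  have htail : HasSum (fun l => qterm r s d (l + 1)) (S - 1) := by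
    simpa [qterm_zero] using (hasSum_nat_add_iff' 1).mpr hq
  have hNtail : HasSum (fun l : ℕ => ((l : ℝ) + 1) * qterm r s d (l + 1)) N := by
    simpa using (hasSum_nat_add_iff' 1).mpr hN
  have hbalance : s * (S - 1) + d * N = r * S := by
    refine ((htail.mul_left s).add (hNtail.mul_left d)).unique ?_
    convert hq.mul_left r using 2 with l
    rw [qterm_succ]
    field_simp
  have hS : 0 < S := tsum_qterm_pos hr hs hd
  show s * (1 - S⁻¹) = r - d * (N / S)
  field_simp
  linarith

theorem strictAnti_qterm_div_qterm {x y : ℝ} (hr : 0 < r) (hx : 0 ≤ x) (hxy : x < y)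
    (hd : 0 < d) : StrictAnti fun l => qterm r y d l / qterm r x d l := by
  refine strictAnti_nat_of_succ_lt fun l => ?_
  have hy : 0 ≤ y := hx.trans hxy.le
  have hrate : r / (y + (l + 1) * d) < r / (x + (l + 1) * d) :=
    div_lt_div_of_pos_left hr (by positivity) (by linarith)
  rw [qterm_succ, qterm_succ, mul_div_mul_comm]
  exact mul_lt_of_lt_one_left (div_pos (qterm_pos hr hy hd l) (qterm_pos hr hx hd l))
    ((div_lt_one (by positivity)).mpr hrate)

end Queue

theorem stmt16 (r d : ℝ) (hr : 0 < r) (hd : 0 < d) :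
    ContinuousOn (fun σ : ℝ => σ * (1 - Pi0 r σ d)) (Set.Ici 0) ∧
    StrictMonoOn (fun σ : ℝ => σ * (1 - Pi0 r σ d)) (Set.Ici 0) ∧
    (0 : ℝ) * (1 - Pi0 r 0 d) = 0 ∧
    (∀ σ : ℝ, 0 ≤ σ → σ * (1 - Pi0 r σ d) < r) := by
  refine ⟨?_, ?_, zero_mul _, fun σ hσ => ?_⟩
  · exact continuousOn_id.mul (continuousOn_const.sub ((continuousOn_tsum_qterm hr hd).inv₀
      fun σ hσ => (tsum_qterm_pos hr hσ hd).ne'))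
  · intro x hx y hy hxy
    have hratio := strictAnti_qterm_div_qterm hr hx hxy hd
    have hmean := tsum_nat_mul_mul_tsum_lt (qterm_pos hr hx hd) (fun n => (qterm_pos hr hy hd n).le)
      hratio.antitone (hratio zero_lt_one) (summable_nat_mul_qterm hr hx hd)
      (summable_nat_mul_qterm hr hy hd)
    rw [← div_lt_div_iff₀ (tsum_qterm_pos hr hy hd) (tsum_qterm_pos hr hx hd)] at hmean
    simp only [mul_one_sub_Pi0 hr hx hd, mul_one_sub_Pi0 hr hy hd]
    exact sub_lt_sub_left (mul_lt_mul_of_pos_left hmean hd) r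
  · have hmean : 0 < (∑' n : ℕ, (n : ℝ) * qterm r σ d n) / ∑' n, qterm r σ d n :=
      div_pos ((summable_nat_mul_qterm hr hσ hd).tsum_pos
        (fun n => mul_nonneg n.cast_nonneg (qterm_pos hr hσ hd n).le) 1
        (by simpa using qterm_pos hr hσ hd 1)) (tsum_qterm_pos hr hσ hd)
    rw [mul_one_sub_Pi0 hr hσ hd]
    linarith [mul_pos hd hmean]
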